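/- arXiv:1201.5909 — 3 statements merged into one kernel-verified Lean document; each statement's English description precedes it below -/
import Mathlib

section
/- Let n ≥ 1 and let x = (x_1, …, x_n) be a sequence of integers each at least −1 whose sum equals −1. Let s_0 = 0 and s_i = s_{i−1} + x_i be the partial sums, and let σ = min{ i ∈ {1,…,n} : s_i = min_{1 ≤ j ≤ n} s_j } be the first time the walk attains its absolute minimum. Then the walk whose steps are the σ-th cyclic shift x^{(σ)} (the sequence whose j-th term is x_{(σ+j) mod n}) hits −1 for the first time exactly at step n; that is, its partial sums are ≥ 0 at steps 1,…,n−1 and equal −1 at step n. -/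
open Finset

/-- **Re-rooting at the first minimum gives a first passage to -1 at step n.**
`x 1, …, x n` are integers `≥ -1` summing to `-1`; `s i = x 1 + ⋯ + x i` are the
partial sums; `σ` is the first index in `{1,…,n}` at which `s` attains its minimum
over `{1,…,n}`.  The walk with steps given by the `σ`-th cyclic shift of `x`
(whose `j`-th step is `x ((σ + j) mod n)`, residues taken in `{1,…,n}`)
has partial sums `≥ 0` at steps `1,…,n-1` and equal to `-1` at step `n`. -/
theorem stmt0 (n : ℕ) (hn : 1 ≤ n) (x : ℕ → ℤ)
    (hx : ∀ i ∈ Finset.Icc 1 n, -1 ≤ x i)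
    (hsum : ∑ i ∈ Finset.Icc 1 n, x i = -1)
    (s : ℕ → ℤ) (hs : ∀ i, s i = ∑ j ∈ Finset.Icc 1 i, x j)
    (σ : ℕ)
    (hσ : σ = sInf {i | i ∈ Finset.Icc 1 n ∧ ∀ j ∈ Finset.Icc 1 n, s i ≤ s j})
    (t : ℕ → ℤ)
    (ht : ∀ i, t i = ∑ j ∈ Finset.Icc 1 i, x (((σ + j - 1) % n) + 1)) :
    (∀ i, 1 ≤ i → i < n → 0 ≤ t i) ∧ t n = -1 := by
  have hne : {i | i ∈ Finset.Icc 1 n ∧ ∀ j ∈ Finset.Icc 1 n, s i ≤ s j}.Nonempty := by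
    obtain ⟨m, hm, hmin⟩ := Finset.exists_min_image (Finset.Icc 1 n) s
      ⟨1, Finset.mem_Icc.mpr ⟨le_refl 1, hn⟩⟩
    exact ⟨m, hm, hmin⟩
  have hmem : σ ∈ {i | i ∈ Finset.Icc 1 n ∧ ∀ j ∈ Finset.Icc 1 n, s i ≤ s j} := by
    rw [hσ]; exact Nat.sInf_mem hne
  obtain ⟨hσIcc, hσmin⟩ := hmem
  rw [Finset.mem_Icc] at hσIcc
  obtain ⟨hσ1, hσn⟩ := hσIcc
  have hsn : s n = -1 := by rw [hs]; exact hsum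
  have hstrict : ∀ j, 1 ≤ j → j < σ → s σ < s j := by
    intro j hj1 hjσ
    have hjn : j ≤ n := le_trans hjσ.le hσn
    have hj : ¬ (j ∈ Finset.Icc 1 n ∧ ∀ k ∈ Finset.Icc 1 n, s j ≤ s k) := by
      rw [hσ] at hjσ
      exact Nat.notMem_of_lt_sInf hjσ
    push_neg at hj
    obtain ⟨k, hk, hks⟩ := hj (Finset.mem_Icc.mpr ⟨hj1, hjn⟩)
    exact lt_of_le_of_lt (hσmin k hk) hks
  -- splitting sums
  have hsplit : ∀ a b : ℕ, a ≤ b → s b = s a + ∑ j ∈ Finset.Ioc a b, x j := by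
    intro a b hab
    rw [hs, hs, show Finset.Icc 1 a = Finset.Ioc 0 a from (Finset.Icc_add_one_left_eq_Ioc 0 a),
      show Finset.Icc 1 b = Finset.Ioc 0 b from (Finset.Icc_add_one_left_eq_Ioc 0 b)]
    exact (Finset.sum_Ioc_consecutive x (Nat.zero_le a) hab).symm
  have hshift : ∀ (f : ℕ → ℤ) (c i : ℕ),
      ∑ j ∈ Finset.Ioc c (c + i), f j = ∑ j ∈ Finset.Icc 1 i, f (c + j) := by
    intro f c i
    induction i with
    | zero => simp
    | succ k ih =>
      rw [show c + (k + 1) = (c + k) + 1 from rfl,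
        Finset.sum_Ioc_succ_top (Nat.le_add_right c k) f,
        Finset.sum_Icc_succ_top (Nat.le_add_left 1 k), ih,
        show c + (k + 1) = c + k + 1 from rfl]
  -- Lemma A: no wrap
  have hA : ∀ i, i ≤ n - σ → t i = s (σ + i) - s σ := by
    intro i hi
    have hterm : ∀ j ∈ Finset.Icc 1 i, x ((σ + j - 1) % n + 1) = x (σ + j) := by
      intro j hj
      rw [Finset.mem_Icc] at hj
      have h1 : σ + j - 1 < n := by omega
      rw [Nat.mod_eq_of_lt h1]
      congr 1; omega
    rw [ht, Finset.sum_congr rfl hterm, ← hshift x σ i,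
      hsplit σ (σ + i) (Nat.le_add_right σ i)]
    ring
  -- Lemma B: wrap
  have hB : ∀ i, n - σ < i → i ≤ n → t i = s n - s σ + s (σ + i - n) := by
    intro i hlo hhi
    have hsplit2 : t i = t (n - σ) + ∑ j ∈ Finset.Ioc (n - σ) i, x ((σ + j - 1) % n + 1) := by
      rw [ht, ht, show Finset.Icc 1 (n - σ) = Finset.Ioc 0 (n - σ) from (Finset.Icc_add_one_left_eq_Ioc 0 _),
        show Finset.Icc 1 i = Finset.Ioc 0 i from (Finset.Icc_add_one_left_eq_Ioc 0 i)]
      exact (Finset.sum_Ioc_consecutive _ (Nat.zero_le _) hlo.le).symm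
    have hterm : ∀ j ∈ Finset.Ioc (n - σ) i, x ((σ + j - 1) % n + 1) = x (σ + j - n) := by
      intro j hj
      rw [Finset.mem_Ioc] at hj
      have h1 : n ≤ σ + j - 1 := by omega
      rw [Nat.mod_eq_sub_mod h1, Nat.mod_eq_of_lt (by omega)]
      congr 1; omega
    have hre : ∑ j ∈ Finset.Ioc (n - σ) i, x (σ + j - n) = s (σ + i - n) := by
      have h2 : (n - σ) + (σ + i - n) = i := by omega
      rw [hs, show Finset.Icc 1 (σ + i - n) = Finset.Ioc 0 (σ + i - n) from (Finset.Icc_add_one_left_eq_Ioc 0 _)]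
      rw [show Finset.Ioc (n - σ) i = Finset.Ioc (n - σ) ((n - σ) + (σ + i - n)) from by rw [h2]]
      rw [hshift (fun j => x (σ + j - n)) (n - σ) (σ + i - n)]
      rw [show Finset.Ioc 0 (σ + i - n) = Finset.Icc 1 (σ + i - n) from (Finset.Icc_add_one_left_eq_Ioc 0 _).symm]
      apply Finset.sum_congr rfl
      intro k hk
      rw [Finset.mem_Icc] at hk
      congr 1; omega
    have htA : t (n - σ) = s n - s σ := by
      rw [hA (n - σ) le_rfl]
      congr 2; omega
    rw [hsplit2, htA, Finset.sum_congr rfl hterm, hre]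
  constructor
  · intro i hi1 hin
    by_cases hc : i ≤ n - σ
    · rw [hA i hc]
      have : s σ ≤ s (σ + i) := hσmin (σ + i) (Finset.mem_Icc.mpr ⟨by omega, by omega⟩)
      linarith
    · push_neg at hc
      rw [hB i hc hin.le, hsn]
      have h1 : 1 ≤ σ + i - n := by omega
      have h2 : σ + i - n < σ := by omega
      have := hstrict (σ + i - n) h1 h2
      omega
  · rw [hB n (by omega) le_rfl, hsn, show σ + n - n = σ from by omega]
    ring
end

section
/- Let n ≥ 1 and let x = (x_1, …, x_n) be a sequence of integers each at least −1 whose sum equals −1. Let σ = min{ i ∈ {1,…,n} : s_i = min_{1 ≤ j ≤ n} s_j } where s_i are the partial sums of x. Then σ is the unique index i ∈ {1,…,n} such that the walk with steps given by the i-th cyclic shift x^{(i)} hits −1 for the first time at step n: for every i ∈ {1,…,n} with i ≠ σ, the partial sums of x^{(i)} take the value −1 (or smaller) at some step strictly before n, or fail to be ≥ 0 at some step before n. -/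
open Finset

/-- **Uniqueness of the cyclic shift giving a first passage to -1 at step n.**
`x 1, …, x n` are integers `≥ -1` summing to `-1`; `s i` are the partial sums and
`σ` is the first index in `{1,…,n}` at which `s` attains its minimum over `{1,…,n}`.
For every `i ∈ {1,…,n}` with `i ≠ σ`, the walk with steps given by the `i`-th cyclic
shift of `x` fails to hit `-1` for the first time at step `n`: its partial sums take a
value `≤ -1` at some step strictly before `n`, or fail to be `≥ 0` at some step
before `n`. -/
theorem stmt1 (n : ℕ) (hn : 1 ≤ n) (x : ℕ → ℤ)
    (hx : ∀ i ∈ Finset.Icc 1 n, -1 ≤ x i)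
    (hsum : ∑ i ∈ Finset.Icc 1 n, x i = -1)
    (s : ℕ → ℤ) (hs : ∀ i, s i = ∑ j ∈ Finset.Icc 1 i, x j)
    (σ : ℕ)
    (hσ : σ = sInf {i | i ∈ Finset.Icc 1 n ∧ ∀ j ∈ Finset.Icc 1 n, s i ≤ s j})
    (t : ℕ → ℕ → ℤ)
    (ht : ∀ i k, t i k = ∑ j ∈ Finset.Icc 1 k, x (((i + j - 1) % n) + 1)) :
    ∀ i ∈ Finset.Icc 1 n, i ≠ σ →
      (∃ j, 1 ≤ j ∧ j < n ∧ t i j ≤ -1) ∨ (∃ j, 1 ≤ j ∧ j < n ∧ t i j < 0) := by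
  have hs0 : s 0 = 0 := by rw [hs]; simp
  have hsn : s n = -1 := by rw [hs]; exact hsum
  have hstep : ∀ k, s (k + 1) = s k + x (k + 1) := by
    intro k
    rw [hs (k + 1), hs k, Finset.sum_Icc_succ_top (by omega : 1 ≤ k + 1)]
  have key : ∀ i, 1 ≤ i → i ≤ n → ∀ j, j ≤ n →
      t i j = if i + j ≤ n then s (i + j) - s i else s (i + j - n) - s i + s n := by
    intro i hi1 hin j
    induction j with
    | zero =>
      intro _
      rw [ht]
      simp [hin]
    | succ j ih =>
      intro hj
      have hj' : j ≤ n := by omega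
      have hsplit : t i (j + 1) = t i j + x ((i + j) % n + 1) := by
        rw [ht, ht, Finset.sum_Icc_succ_top (by omega : 1 ≤ j + 1)]
        congr 3
      rw [hsplit, ih hj']
      by_cases h1 : i + (j + 1) ≤ n
      · have hmod : (i + j) % n = i + j := Nat.mod_eq_of_lt (by omega)
        rw [if_pos (by omega : i + j ≤ n), if_pos h1, hmod,
          show i + (j + 1) = (i + j) + 1 from by omega, hstep (i + j)]
        ring
      · by_cases h2 : i + j ≤ n
        · have hij : i + j = n := by omega
          rw [if_pos h2, if_neg h1]
          have hmod : (i + j) % n = 0 := by rw [hij]; exact Nat.mod_self n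
          rw [hmod, show i + (j + 1) - n = 1 from by omega]
          have h1s := hstep 0
          rw [zero_add] at h1s
          rw [h1s, hs0, hij]
          ring
        · rw [if_neg h2, if_neg h1]
          have hmod : (i + j) % n = i + j - n := by
            rw [Nat.mod_eq_sub_mod (by omega), Nat.mod_eq_of_lt (by omega)]
          rw [hmod, show i + (j + 1) - n = (i + j - n) + 1 from by omega,
            hstep (i + j - n)]
          ring
  have hne : {i | i ∈ Finset.Icc 1 n ∧ ∀ j ∈ Finset.Icc 1 n, s i ≤ s j}.Nonempty := by
    obtain ⟨a, ha, hmin⟩ := Finset.exists_min_image (Finset.Icc 1 n) s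
      ⟨1, by simp [hn]⟩
    exact ⟨a, ha, hmin⟩
  have hσmem : σ ∈ {i | i ∈ Finset.Icc 1 n ∧ ∀ j ∈ Finset.Icc 1 n, s i ≤ s j} := by
    rw [hσ]; exact Nat.sInf_mem hne
  obtain ⟨hσIcc, hσmin⟩ := hσmem
  obtain ⟨hσ1, hσn⟩ := Finset.mem_Icc.mp hσIcc
  have hstrict : ∀ i ∈ Finset.Icc 1 n, i < σ → s σ < s i := by
    intro i hiI hlt
    by_contra h
    push_neg at h
    have hmem : i ∈ {i | i ∈ Finset.Icc 1 n ∧ ∀ j ∈ Finset.Icc 1 n, s i ≤ s j} :=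
      ⟨hiI, fun j hj => le_trans h (hσmin j hj)⟩
    have := Nat.sInf_le hmem
    omega
  intro i hiI hiσ
  left
  obtain ⟨hi1, hin⟩ := Finset.mem_Icc.mp hiI
  rcases lt_or_gt_of_ne hiσ with hlt | hgt
  · refine ⟨σ - i, by omega, by omega, ?_⟩
    have := key i hi1 hin (σ - i) (by omega)
    rw [if_pos (by omega : i + (σ - i) ≤ n), show i + (σ - i) = σ from by omega] at this
    have hs' := hstrict i hiI hlt
    omega
  · refine ⟨σ + n - i, by omega, by omega, ?_⟩
    have := key i hi1 hin (σ + n - i) (by omega)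
    rw [if_neg (by omega : ¬ i + (σ + n - i) ≤ n),
      show i + (σ + n - i) - n = σ from by omega] at this
    have hs' := hσmin i hiI
    omega
end

section
/- Let X_1, …, X_n be i.i.d. random variables taking values in the integers ≥ −1, let S_0 = 0 and S_i = S_{i−1} + X_i for 1 ≤ i ≤ n, and suppose the event Bridge = {S_n = −1} has positive probability. Let R(S) denote the path re-rooted at the minimum: R(S) is the walk whose steps are the σ-th cyclic shift of (X_1,…,X_n), where σ is the first index at which (S_i) attains its minimum over i ∈ {1,…,n}. Then the conditional law of the path R(S) = (R(S)_0, …, R(S)_n) given Bridge equals the conditional law of the path S = (S_0, …, S_n) given the event Exc = {S_n = −1 and S_i ≥ 0 for all 1 ≤ i < n}. -/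
/-!
Cycle lemma: let the steps `x₁, …, xₙ` sum to `-1`. The shift of `x` at time `k` is an
excursion iff `S k ≤ S j` for all `k < j < k + n`; as the walk of the periodically extended
steps satisfies `S (j + n) = S j - 1`, this says exactly that `k` is the first minimum of `S`
on `{1, …, n}`. So every bridge has exactly one shift that is an excursion. I.i.d. steps have
a law invariant under cyclic shifts, hence `P(Bridge, R ∈ A) = n · P(Exc, S ∈ A)` for every set
of paths `A`, and the factor `n` cancels upon conditioning.
-/

open MeasureTheory ProbabilityTheory Finset
open scoped ProbabilityTheory ENNReal
open Fin.NatCast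

lemma sInf_argmin_eq_iff {β : Type*} [LinearOrder β] (f : ℕ → β) {s : Finset ℕ} {k : ℕ}
    (hk : k ∈ s) :
    sInf {i | i ∈ s ∧ ∀ j ∈ s, f i ≤ f j} = k ↔
      (∀ j ∈ s, f k ≤ f j) ∧ ∀ j ∈ s, j < k → f k < f j := by
  have hne : {i | i ∈ s ∧ ∀ j ∈ s, f i ≤ f j}.Nonempty := s.exists_min_image f ⟨k, hk⟩
  constructor
  · intro h
    have hkmin : ∀ j ∈ s, f k ≤ f j := (h ▸ Nat.sInf_mem hne).2
    refine ⟨hkmin, fun j hj hjk => lt_of_not_ge fun hjk' => ?_⟩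
    have : sInf {i | i ∈ s ∧ ∀ j ∈ s, f i ≤ f j} ≤ j :=
      Nat.sInf_le ⟨hj, fun i hi => hjk'.trans (hkmin i hi)⟩
    omega
  · rintro ⟨hmin, hstrict⟩
    exact le_antisymm (Nat.sInf_le ⟨hk, hmin⟩) <| le_csInf hne fun j ⟨hj, hjmin⟩ =>
      not_lt.1 fun hjk => (hstrict j hj hjk).not_ge (hjmin k hk)

namespace Vervaat

variable {n : ℕ} [NeZero n]

def rotate {α : Type*} (k : ℕ) (x : Fin n → α) : Fin n → α := fun i => x (k + i)

lemma map_rotate_pi {α : Type*} [MeasurableSpace α] (m : Measure α) [SigmaFinite m] (k : ℕ) :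
    (Measure.pi fun _ : Fin n => m).map (rotate k) = Measure.pi fun _ => m :=
  (measurePreserving_arrowCongr' (fun _ => m) (fun _ => m) (Equiv.addLeft (k : Fin n)).symm
    (MeasurableEquiv.refl α) fun _ => MeasurePreserving.id m).map_eq

/-- Step indices are read modulo `n`, so `walk x` is the walk of the periodically extended steps. -/
def walk (x : Fin n → ℤ) (i : ℕ) : ℤ := ∑ j ∈ range i, x j

lemma walk_add (x : Fin n → ℤ) (k i : ℕ) : walk x (k + i) = walk x k + walk (rotate k x) i := by
  simp only [walk, rotate, sum_range_add, Nat.cast_add]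

lemma walk_eq_sum_univ (x : Fin n → ℤ) : walk x n = ∑ i, x i := by
  rw [walk, ← Fin.sum_univ_eq_sum_range (fun j => x j)]
  simp only [Fin.cast_val_eq_self]

lemma walk_rotate_period (x : Fin n → ℤ) (k : ℕ) : walk (rotate k x) n = walk x n := by
  simp only [walk_eq_sum_univ, rotate]
  exact Equiv.sum_comp (Equiv.addLeft (k : Fin n)) x

lemma walk_add_period (x : Fin n → ℤ) (i : ℕ) : walk x (i + n) = walk x i + walk x n := by
  rw [walk_add, walk_rotate_period]


variable (n) in
def bridges : Set (Fin n → ℤ) := {x | walk x n = -1}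

variable (n) in
def excursions : Set (Fin n → ℤ) := {x | walk x n = -1 ∧ ∀ i, 1 ≤ i → i < n → 0 ≤ walk x i}

noncomputable def firstArgmin (x : Fin n → ℤ) : ℕ :=
  sInf {i | i ∈ Icc 1 n ∧ ∀ j ∈ Icc 1 n, walk x i ≤ walk x j}

lemma rotate_mem_excursions_iff {x : Fin n → ℤ} (hx : x ∈ bridges n) {k : ℕ}
    (hk : k ∈ Icc 1 n) : rotate k x ∈ excursions n ↔ firstArgmin x = k := by
  have hx : walk x n = -1 := hx
  have hrot : ∀ i, walk (rotate k x) i = walk x (k + i) - walk x k := fun i => by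
    rw [walk_add]; ring
  have hwrap : ∀ j, walk x (j + n) = walk x j - 1 := fun j => by rw [walk_add_period, hx]; ring
  have hk' := mem_Icc.1 hk
  rw [firstArgmin, sInf_argmin_eq_iff _ hk]
  simp only [excursions, Set.mem_ofPred_eq, walk_rotate_period, hx, true_and]
  simp only [hrot, mem_Icc]
  constructor
  · intro h
    have hbelow : ∀ j, 1 ≤ j → j < k → walk x k < walk x j := fun j hj1 hjk => by
      have := h (j + n - k) (by omega) (by omega)
      rw [show k + (j + n - k) = j + n by omega, hwrap] at this
      omega
    refine ⟨fun j ⟨hj1, hjn⟩ => ?_, fun j ⟨hj1, _⟩ => hbelow j hj1⟩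
    rcases lt_trichotomy j k with hjk | rfl | hkj
    · exact (hbelow j hj1 hjk).le
    · exact le_rfl
    · have := h (j - k) (by omega) (by omega)
      rw [show k + (j - k) = j by omega] at this
      omega
  · rintro ⟨hmin, hstrict⟩ i hi1 hin
    by_cases hkin : k + i ≤ n
    · linarith [hmin (k + i) ⟨by omega, hkin⟩]
    · have := hstrict (k + i - n) ⟨by omega, by omega⟩ (by omega)
      rw [show k + i = (k + i - n) + n by omega, hwrap]
      omega

lemma firstArgmin_mem_Icc (x : Fin n → ℤ) : firstArgmin x ∈ Icc 1 n :=
  (Nat.sInf_mem <| (Icc 1 n).exists_min_image (walk x)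
    ⟨1, mem_Icc.2 ⟨le_rfl, NeZero.one_le⟩⟩).1

lemma mem_bridges_of_rotate_mem_excursions {x : Fin n → ℤ} {k : ℕ}
    (h : rotate k x ∈ excursions n) : x ∈ bridges n :=
  (walk_rotate_period x k).symm.trans h.1

lemma pairwiseDisjoint_rotate_preimage_excursions :
    (Icc 1 n : Set ℕ).PairwiseDisjoint fun k => rotate k ⁻¹' excursions n := by
  intro k hk k' hk' hne
  refine Set.disjoint_left.2 fun x hx hx' => hne ?_
  have hx₀ := mem_bridges_of_rotate_mem_excursions hx
  exact ((rotate_mem_excursions_iff hx₀ hk).1 hx).symm.trans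
    ((rotate_mem_excursions_iff hx₀ hk').1 hx')

def walkPath (x : Fin n → ℤ) : Fin (n + 1) → ℤ := fun i => walk x i

noncomputable def rerootedPath (x : Fin n → ℤ) : Fin (n + 1) → ℤ :=
  walkPath (rotate (firstArgmin x) x)

lemma bridges_inter_preimage_rerootedPath (A : Set (Fin (n + 1) → ℤ)) :
    bridges n ∩ rerootedPath ⁻¹' A =
      ⋃ k ∈ Icc 1 n, rotate k ⁻¹' (excursions n ∩ walkPath ⁻¹' A) := by
  ext x
  simp only [Set.mem_inter_iff, Set.mem_preimage, Set.mem_iUnion, exists_prop]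
  constructor
  · rintro ⟨hx, hxA⟩
    exact ⟨firstArgmin x, firstArgmin_mem_Icc x,
      (rotate_mem_excursions_iff hx (firstArgmin_mem_Icc x)).2 rfl, hxA⟩
  · rintro ⟨k, hk, hexc, hxA⟩
    have hx := mem_bridges_of_rotate_mem_excursions hexc
    refine ⟨hx, ?_⟩
    rwa [rerootedPath, (rotate_mem_excursions_iff hx hk).1 hexc]

lemma measure_bridges_inter_preimage_rerootedPath {ν : Measure (Fin n → ℤ)}
    (hν : ∀ k, ν.map (rotate k) = ν) (A : Set (Fin (n + 1) → ℤ)) :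
    ν (bridges n ∩ rerootedPath ⁻¹' A) = n * ν (excursions n ∩ walkPath ⁻¹' A) := by
  rw [bridges_inter_preimage_rerootedPath, measure_biUnion_finset
    (pairwiseDisjoint_rotate_preimage_excursions.mono fun _ => Set.preimage_mono
      Set.inter_subset_left) fun _ _ => .of_discrete]
  simp_rw [← Measure.map_apply Measurable.of_discrete MeasurableSet.of_discrete, hν]
  rw [sum_const, Nat.card_Icc, Nat.add_sub_cancel, nsmul_eq_mul]

theorem cond_bridges_map_rerootedPath {ν : Measure (Fin n → ℤ)}
    (hν : ∀ k, ν.map (rotate k) = ν) :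
    (ν[|bridges n]).map rerootedPath = (ν[|excursions n]).map walkPath := by
  have hbridges : ν (bridges n) = n * ν (excursions n) := by
    simpa using measure_bridges_inter_preimage_rerootedPath hν Set.univ
  have hn₀ : (n : ℝ≥0∞) ≠ 0 := Nat.cast_ne_zero.2 (NeZero.ne n)
  ext A hA
  rw [Measure.map_apply .of_discrete hA, Measure.map_apply .of_discrete hA,
    cond_apply .of_discrete, cond_apply .of_discrete, hbridges,
    measure_bridges_inter_preimage_rerootedPath hν,
    ENNReal.mul_inv (.inl hn₀) (.inl (ENNReal.natCast_ne_top n)), mul_mul_mul_comm,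
    ENNReal.inv_mul_cancel hn₀ (ENNReal.natCast_ne_top n), one_mul]

lemma sum_Icc_one_eq_walk (f : ℕ → ℤ) {i : ℕ} (hi : i ≤ n) :
    ∑ j ∈ Icc 1 i, f j = walk (fun a : Fin n => f (a + 1)) i := by
  rw [← Ico_add_one_right_eq_Icc, sum_Ico_eq_sum_range, walk, Nat.add_sub_cancel]
  refine sum_congr rfl fun j hj => ?_
  rw [Fin.val_cast_of_lt (by simp at hj; omega), add_comm]

lemma sum_Icc_one_mod_eq_walk_rotate (f : ℕ → ℤ) (m k : ℕ) :
    ∑ j ∈ Icc 1 k, f ((m + j - 1) % n + 1) = walk (rotate m fun a : Fin n => f (a + 1)) k := by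
  rw [← Ico_add_one_right_eq_Icc, sum_Ico_eq_sum_range, walk, Nat.add_sub_cancel]
  refine sum_congr rfl fun j _ => ?_
  rw [rotate, ← Nat.cast_add, Fin.val_natCast, show m + (1 + j) - 1 = m + j by omega]

lemma sInf_argmin_eq_firstArgmin {s : ℕ → ℤ} {x : Fin n → ℤ} (hs : ∀ i ≤ n, s i = walk x i) :
    sInf {i | i ∈ Icc 1 n ∧ ∀ j ∈ Icc 1 n, s i ≤ s j} = firstArgmin x := by
  rw [firstArgmin]
  congr 1
  ext i
  refine and_congr_right fun hi => forall₂_congr fun j hj => ?_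
  rw [hs i (mem_Icc.1 hi).2, hs j (mem_Icc.1 hj).2]

end Vervaat

lemma map_cond_preimage {Ω α : Type*} [MeasurableSpace Ω] [MeasurableSpace α] (μ : Measure Ω)
    {V : Ω → α} (hV : Measurable V) {s : Set α} (hs : MeasurableSet s) :
    (μ[|V ⁻¹' s]).map V = (μ.map V)[|s] := by
  ext t ht
  rw [Measure.map_apply hV ht, cond_apply (hV hs), cond_apply hs, Measure.map_apply hV hs,
    Measure.map_apply hV (hs.inter ht), Set.preimage_inter]

open Vervaat

theorem stmt2_general {Ω : Type*} [MeasurableSpace Ω] (μ : Measure Ω) [IsProbabilityMeasure μ]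
    (n : ℕ) (hn : 1 ≤ n)
    (X : ℕ → Ω → ℤ)
    (hmeas : ∀ i, Measurable (X i))
    (hindep : iIndepFun (fun i : Fin n => X (i.val + 1)) μ)
    (hident : ∀ i ∈ Finset.Icc 1 n, μ.map (X i) = μ.map (X 1))
    (S : ℕ → Ω → ℤ)
    (hS : ∀ i ω, S i ω = ∑ j ∈ Finset.Icc 1 i, X j ω)
    (Bridge : Set Ω) (hBridge : Bridge = {ω | S n ω = -1})
    (Exc : Set Ω)
    (hExc : Exc = {ω | S n ω = -1 ∧ ∀ i, 1 ≤ i → i < n → 0 ≤ S i ω})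
    (σ : Ω → ℕ)
    (hσ : ∀ ω, σ ω = sInf {i | i ∈ Finset.Icc 1 n ∧ ∀ j ∈ Finset.Icc 1 n, S i ω ≤ S j ω})
    (R : ℕ → Ω → ℤ)
    (hR : ∀ k ω, R k ω = ∑ j ∈ Finset.Icc 1 k, X (((σ ω + j - 1) % n) + 1) ω) :
    (μ[|Bridge]).map (fun ω => fun i : Fin (n + 1) => R i.val ω) =
      (μ[|Exc]).map (fun ω => fun i : Fin (n + 1) => S i.val ω) := by
  have : NeZero n := ⟨by omega⟩
  set Y : Ω → Fin n → ℤ := fun ω a => X (a + 1) ω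
  have hY : Measurable Y := measurable_pi_lambda _ fun a => hmeas _
  have hlaw : μ.map Y = Measure.pi fun _ => μ.map (X 1) := by
    rw [(iIndepFun_iff_map_fun_eq_pi_map fun a => (hmeas _).aemeasurable).1 hindep]
    exact congrArg Measure.pi <| funext fun a => hident _ (mem_Icc.2 ⟨by omega, a.isLt⟩)
  have hSY : ∀ ω, ∀ i ≤ n, S i ω = walk (Y ω) i := fun ω i hi => by
    rw [hS, sum_Icc_one_eq_walk _ hi]
  have hσY : ∀ ω, σ ω = firstArgmin (Y ω) := fun ω =>
    (hσ ω).trans (sInf_argmin_eq_firstArgmin (hSY ω))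
  have hBridgeY : Bridge = Y ⁻¹' bridges n := by
    ext ω
    simp [hBridge, bridges, hSY ω n le_rfl]
  have hExcY : Exc = Y ⁻¹' excursions n := by
    ext ω
    simp +contextual [hExc, excursions, hSY ω _ le_rfl, hSY ω _ (Nat.le_of_lt _)]
  have hRY : (fun ω => fun i : Fin (n + 1) => R i.val ω) = rerootedPath ∘ Y := by
    ext ω i
    rw [hR, sum_Icc_one_mod_eq_walk_rotate (X · ω), hσY]
    rfl
  have hSY' : (fun ω => fun i : Fin (n + 1) => S i.val ω) = walkPath ∘ Y := by
    ext ω i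
    exact hSY ω i (Nat.lt_succ_iff.1 i.isLt)
  rw [hRY, hSY', hBridgeY, hExcY, ← Measure.map_map .of_discrete hY,
    ← Measure.map_map .of_discrete hY, map_cond_preimage μ hY .of_discrete,
    map_cond_preimage μ hY .of_discrete]
  exact cond_bridges_map_rerootedPath fun k => hlaw ▸ map_rotate_pi _ k

/-- **Discrete Vervaat transform.**  Let `X 1, …, X n` be i.i.d. integer-valued random
variables with values `≥ -1`, with partial-sum path `S 0 = 0`, `S i = X 1 + ⋯ + X i`.
Let `σ` be the first index in `{1,…,n}` at which `(S i)` attains its minimum over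
`{1,…,n}`, and let `R` be the path whose steps are the `σ`-th cyclic shift of
`(X 1, …, X n)` (re-rooting at the minimum).  If `Bridge = {S n = -1}` has positive
probability, then the conditional law of the path `(R 0, …, R n)` given `Bridge`
equals the conditional law of the path `(S 0, …, S n)` given
`Exc = {S n = -1` and `S i ≥ 0` for all `1 ≤ i < n}`. -/
theorem stmt2 {Ω : Type*} [MeasurableSpace Ω] (μ : Measure Ω) [IsProbabilityMeasure μ]
    (n : ℕ) (hn : 1 ≤ n)
    (X : ℕ → Ω → ℤ)
    (hmeas : ∀ i, Measurable (X i))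
    (hindep : iIndepFun (fun i : Fin n => X (i.val + 1)) μ)
    (hident : ∀ i ∈ Finset.Icc 1 n, μ.map (X i) = μ.map (X 1))
    (hval : ∀ i ∈ Finset.Icc 1 n, ∀ ω, -1 ≤ X i ω)
    (S : ℕ → Ω → ℤ)
    (hS : ∀ i ω, S i ω = ∑ j ∈ Finset.Icc 1 i, X j ω)
    (Bridge : Set Ω) (hBridge : Bridge = {ω | S n ω = -1})
    (hBpos : μ Bridge ≠ 0)
    (Exc : Set Ω)
    (hExc : Exc = {ω | S n ω = -1 ∧ ∀ i, 1 ≤ i → i < n → 0 ≤ S i ω})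
    (hEpos : μ Exc ≠ 0)
    (σ : Ω → ℕ)
    (hσ : ∀ ω, σ ω = sInf {i | i ∈ Finset.Icc 1 n ∧ ∀ j ∈ Finset.Icc 1 n, S i ω ≤ S j ω})
    (R : ℕ → Ω → ℤ)
    (hR : ∀ k ω, R k ω = ∑ j ∈ Finset.Icc 1 k, X (((σ ω + j - 1) % n) + 1) ω) :
    (μ[|Bridge]).map (fun ω => fun i : Fin (n + 1) => R i.val ω) =
      (μ[|Exc]).map (fun ω => fun i : Fin (n + 1) => S i.val ω) :=
  stmt2_general μ n hn X hmeas hindep hident S hS Bridge hBridge Exc hExc σ hσ R hR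
end
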